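/- Let m ≥ 3 be odd and let i, j be integers with 0 ≤ i ≤ α^(m) and 0 ≤ j ≤ β^(m). Then: (a) P^(m)(i,j) implies P^(m+1)(2i, 2j+1); (b) if j ≥ 1, then P^(m)(i,j−1) and P^(m)(i,j) together imply P^(m+1)(2i, 2j); (c) if i+1 ≤ α^(m), then P^(m)(i,j) and P^(m)(i+1,j) together imply P^(m+1)(2i+1, 2j+1); (d) if j ≥ 1 and i+1 ≤ α^(m), then P^(m)(i,j−1), P^(m)(i,j), P^(m)(i+1,j−1) and P^(m)(i+1,j) together imply P^(m+1)(2i+1, 2j). -/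

import Mathlib

open Module

/-- `α(m)`: the largest integer not exceeding `(2/3)·2^m`. -/
def alph (m : ℕ) : ℕ := 2 ^ (m + 1) / 3

/-- `β(m)`: the largest integer not exceeding `(1/3)·2^m`. -/
def bet (m : ℕ) : ℕ := 2 ^ m / 3

/-- `wt x`: the number of ones in the binary representation of `x`. -/
def wtN (x : ℕ) : ℕ := (Nat.digits 2 x).count 1

/-- `w_l(S)`: the number of elements of `S` of binary weight at least `l`. -/
def wcount (l : ℕ) (S : Finset ℕ) : ℕ := (S.filter fun x => l ≤ wtN x).card

/-- The statement `P^(m)(i,j)`: for every `l ∈ {1,…,m}`,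
`w_l([α−i, α−1]) + w_l([β−j, β−1]) ≥ w_l([1, i+j])`. -/
def Pm (m i j : ℕ) : Prop :=
  ∀ l, 1 ≤ l → l ≤ m →
    wcount l (Finset.Icc (alph m - i) (alph m - 1)) +
      wcount l (Finset.Icc (bet m - j) (bet m - 1)) ≥
      wcount l (Finset.Icc 1 (i + j))

/-!
Doubling sends `[u, v]` onto `[2u, 2v + 1]`, with `wt (2x) = wt x` and `wt (2x + 1) = wt x + 1`, so at
level `l` the doubled interval counts what `[u, v]` counts at levels `l` and `l - 1`. For odd `m`,
`α(m+1) = 2α(m)` and `β(m+1) = 2β(m) + 1`, so every interval of `P^(m+1)(i', j')` is a doubled interval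
of `P^(m)` up to one or two boundary points, and level `l` of `P^(m+1)(i', j')` follows from level `l`
of `P^(m)(i, j)` plus level `l - 1` of a neighbouring `P^(m)(i₂, j₂)`. The point `2β(m)`, of weight
`wt β(m) ≥ 1`, pays for the point `1` of `[1, i' + j']`; the other boundary points cancel or have the
right sign because `[l ≤ w] ≤ [l - 1 ≤ w]`.
-/

open Finset

@[simp] lemma wtN_zero : wtN 0 = 0 := rfl

lemma wtN_two_mul (x : ℕ) : wtN (2 * x) = wtN x := by
  rcases Nat.eq_zero_or_pos x with rfl | hx
  · rfl
  · rw [wtN, Nat.digits_def' (by norm_num) (by omega)]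
    simp [wtN]

lemma wtN_two_mul_add_one (x : ℕ) : wtN (2 * x + 1) = wtN x + 1 := by
  rw [wtN, Nat.digits_def' (by norm_num) (by omega)]
  simp [wtN, Nat.add_mod, Nat.add_div]

lemma wtN_le_of_lt_two_pow {x n : ℕ} (h : x < 2 ^ n) : wtN x ≤ n := by
  rcases Nat.eq_zero_or_pos x with rfl | hx
  · simp
  calc wtN x ≤ (Nat.digits 2 x).length := List.count_le_length
    _ = Nat.log 2 x + 1 := Nat.length_digits 2 x (by norm_num) hx.ne'
    _ ≤ n := Nat.log_lt_of_lt_pow hx.ne' h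

lemma wtN_pos {x : ℕ} (hx : 0 < x) : 0 < wtN x := by
  induction x using Nat.strong_induction_on with
  | _ x ih =>
    obtain ⟨y, rfl | rfl⟩ := Nat.even_or_odd' x
    · rw [wtN_two_mul]
      exact ih y (by omega) (by omega)
    · rw [wtN_two_mul_add_one]
      omega

lemma wcount_zero (S : Finset ℕ) : wcount 0 S = #S := by
  simp [wcount]

lemma wcount_eq_zero {l : ℕ} {S : Finset ℕ} (h : ∀ x ∈ S, wtN x < l) : wcount l S = 0 := by
  simpa [wcount, filter_eq_empty_iff] using h

lemma wcount_insert (l : ℕ) {x : ℕ} {S : Finset ℕ} (hx : x ∉ S) :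
    wcount l (insert x S) = wcount l S + if l ≤ wtN x then 1 else 0 := by
  unfold wcount
  rw [filter_insert]
  split_ifs
  · rw [card_insert_of_notMem (by simp [hx])]
  · rfl

lemma wcount_Icc_add_one_right (l : ℕ) {a b : ℕ} (h : a ≤ b + 1) :
    wcount l (Icc a (b + 1)) = wcount l (Icc a b) + if l ≤ wtN (b + 1) then 1 else 0 := by
  rw [← insert_Icc_right_eq_Icc_add_one h, wcount_insert l (by simp)]

lemma wcount_Icc_zero_left (l n : ℕ) :
    wcount l (Icc 0 n) = wcount l (Icc 1 n) + if l = 0 then 1 else 0 := by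
  rw [← insert_Icc_add_one_left_eq_Icc (Nat.zero_le n), wcount_insert l (by simp)]
  simp

lemma wcount_Icc_two_mul (k u v : ℕ) :
    wcount (k + 1) (Icc (2 * u) (2 * v + 1)) = wcount (k + 1) (Icc u v) + wcount k (Icc u v) := by
  have hsplit : Icc (2 * u) (2 * v + 1) =
      (Icc u v).image (2 * ·) ∪ (Icc u v).image (2 * · + 1) := by
    ext x
    simp only [mem_Icc, mem_union, mem_image]
    constructor
    · intro hx
      obtain ⟨y, rfl | rfl⟩ := Nat.even_or_odd' x
      · exact Or.inl ⟨y, by omega, rfl⟩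
      · exact Or.inr ⟨y, by omega, rfl⟩
    · rintro (⟨y, hy, rfl⟩ | ⟨y, hy, rfl⟩) <;> omega
  have hdisj : Disjoint ((Icc u v).image (2 * ·)) ((Icc u v).image (2 * · + 1)) := by
    simp only [disjoint_left, mem_image]
    rintro _ ⟨y, -, rfl⟩ ⟨z, -, h⟩
    omega
  rw [wcount, hsplit, filter_union, card_union_of_disjoint (disjoint_filter_filter hdisj),
    filter_image, filter_image, card_image_of_injective _ (fun a b h => by simpa using h),
    card_image_of_injective _ (fun a b h => by simpa using h)]
  simp [wtN_two_mul, wtN_two_mul_add_one, wcount]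

lemma wcount_Icc_one_two_mul_add_one (k n : ℕ) :
    wcount (k + 1) (Icc 1 (2 * n + 1)) =
      wcount (k + 1) (Icc 1 n) + wcount k (Icc 1 n) + if k = 0 then 1 else 0 := by
  have h := wcount_Icc_two_mul k 0 n
  rw [mul_zero, wcount_Icc_zero_left, wcount_Icc_zero_left, wcount_Icc_zero_left] at h
  simpa [add_assoc] using h

lemma wcount_Icc_one_two_mul_add_two (k n : ℕ) :
    wcount (k + 1) (Icc 1 (2 * n + 2)) =
      wcount (k + 1) (Icc 1 (n + 1)) + wcount k (Icc 1 n) + if k = 0 then 1 else 0 := by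
  have hodd := wcount_Icc_one_two_mul_add_one k (n + 1)
  rw [show 2 * (n + 1) + 1 = 2 * n + 2 + 1 by ring, wcount_Icc_add_one_right _ (by omega),
    show 2 * n + 2 + 1 = 2 * (n + 1) + 1 by ring, wtN_two_mul_add_one,
    wcount_Icc_add_one_right k (by omega : 1 ≤ n + 1)] at hodd
  split_ifs at hodd ⊢ <;> omega

lemma wcount_Icc_one_two_mul_add_two_le (k n : ℕ) :
    wcount (k + 1) (Icc 1 (2 * n + 2)) ≤
      wcount (k + 1) (Icc 1 n) + wcount k (Icc 1 (n + 1)) + if k = 0 then 1 else 0 := by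
  rw [wcount_Icc_one_two_mul_add_two, wcount_Icc_add_one_right (k + 1) (by omega : 1 ≤ n + 1),
    wcount_Icc_add_one_right k (by omega : 1 ≤ n + 1)]
  split_ifs <;> omega

-- Truncated subtraction makes `topIcc 0 0 = {0}` rather than `∅`.
def topIcc (a k : ℕ) : Finset ℕ := Icc (a - k) (a - 1)

lemma le_card_topIcc {a k : ℕ} (h : k ≤ a) : k ≤ #(topIcc a k) := by
  rw [topIcc, Nat.card_Icc]
  omega

lemma wcount_topIcc_add_one (l : ℕ) {a k : ℕ} (h : k < a) :
    wcount l (topIcc a (k + 1)) = wcount l (topIcc a k) + if l ≤ wtN (a - (k + 1)) then 1 else 0 := by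
  rw [topIcc, topIcc, ← insert_Icc_add_one_left_eq_Icc (show a - (k + 1) ≤ a - 1 by omega),
    show a - (k + 1) + 1 = a - k by omega, wcount_insert l (by rw [mem_Icc]; omega)]

lemma wcount_topIcc_two_mul_two_mul {a : ℕ} (ha : 1 ≤ a) (k i : ℕ) :
    wcount (k + 1) (topIcc (2 * a) (2 * i)) =
      wcount (k + 1) (topIcc a i) + wcount k (topIcc a i) := by
  rw [topIcc, show 2 * a - 2 * i = 2 * (a - i) by omega, show 2 * a - 1 = 2 * (a - 1) + 1 by omega,
    wcount_Icc_two_mul, topIcc]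

lemma wcount_topIcc_two_mul_two_mul_add_one {a i : ℕ} (hi : i < a) (k : ℕ) :
    wcount (k + 1) (topIcc (2 * a) (2 * i + 1)) =
      wcount (k + 1) (topIcc a i) + wcount k (topIcc a (i + 1)) := by
  rw [wcount_topIcc_add_one _ (by omega), wcount_topIcc_two_mul_two_mul (by omega),
    wcount_topIcc_add_one _ hi, show 2 * a - (2 * i + 1) = 2 * (a - (i + 1)) + 1 by omega,
    wtN_two_mul_add_one]
  split_ifs <;> omega

lemma wcount_topIcc_two_mul_add_one_two_mul_add_one {a : ℕ} (ha : 1 ≤ a) (k j : ℕ) :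
    wcount (k + 1) (topIcc (2 * a + 1) (2 * j + 1)) =
      wcount (k + 1) (topIcc a j) + wcount k (topIcc a j) + if k + 1 ≤ wtN a then 1 else 0 := by
  rw [topIcc, show 2 * a + 1 - (2 * j + 1) = 2 * (a - j) by omega,
    show 2 * a + 1 - 1 = 2 * (a - 1) + 1 + 1 by omega, wcount_Icc_add_one_right _ (by omega),
    wcount_Icc_two_mul, show 2 * (a - 1) + 1 + 1 = 2 * a by omega, wtN_two_mul, topIcc]

lemma le_wcount_topIcc_two_mul_add_one_two_mul_succ {a j : ℕ} (hj : j < a) (k : ℕ) :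
    wcount (k + 1) (topIcc a (j + 1)) + wcount k (topIcc a j) +
        (if k + 1 ≤ wtN a then 1 else 0) ≤
      wcount (k + 1) (topIcc (2 * a + 1) (2 * (j + 1))) := by
  rw [show 2 * (j + 1) = 2 * j + 1 + 1 by ring,
    wcount_topIcc_add_one (k + 1) (show 2 * j + 1 < 2 * a + 1 by omega),
    wcount_topIcc_two_mul_add_one_two_mul_add_one (by omega), wcount_topIcc_add_one (k + 1) hj,
    show 2 * a + 1 - (2 * j + 1 + 1) = 2 * (a - (j + 1)) + 1 by omega,
    wtN_two_mul_add_one]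
  split_ifs <;> omega

lemma two_pow_mod_three_of_odd {m : ℕ} (hm : Odd m) : 2 ^ m % 3 = 2 := by
  obtain ⟨k, rfl⟩ := hm
  rw [pow_succ, pow_mul, Nat.mul_mod, Nat.pow_mod]
  norm_num

lemma alph_succ_of_odd {m : ℕ} (hm : Odd m) : alph (m + 1) = 2 * alph m := by
  have := two_pow_mod_three_of_odd hm
  rw [alph, alph, pow_succ, pow_succ]
  omega

lemma bet_succ_of_odd {m : ℕ} (hm : Odd m) : bet (m + 1) = 2 * bet m + 1 := by
  have := two_pow_mod_three_of_odd hm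
  rw [bet, bet, pow_succ]
  omega

lemma one_le_bet {m : ℕ} (hm : 2 ≤ m) : 1 ≤ bet m :=
  (Nat.le_div_iff_mul_le (by norm_num)).2 <| le_trans (by norm_num) (Nat.pow_le_pow_right two_pos hm)

lemma alph_add_bet_lt (m : ℕ) : alph m + bet m < 2 ^ m := by
  have h3 : 2 ^ m % 3 ≠ 0 := fun h =>
    absurd (Nat.prime_three.dvd_of_dvd_pow (Nat.dvd_of_mod_eq_zero h)) (by norm_num)
  rw [alph, bet, pow_succ]
  omega

def WeightIneq (m i j l : ℕ) : Prop :=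
  wcount l (Icc 1 (i + j)) ≤ wcount l (topIcc (alph m) i) + wcount l (topIcc (bet m) j)

-- At `l = 0` both sides count elements; for `l > m`, `[1, i + j]` lies below `2 ^ m`.
lemma Pm.weightIneq {m i j : ℕ} (hP : Pm m i j) (hi : i ≤ alph m) (hj : j ≤ bet m) (l : ℕ) :
    WeightIneq m i j l := by
  rcases Nat.eq_zero_or_pos l with rfl | hl
  · rw [WeightIneq, wcount_zero, wcount_zero, wcount_zero, Nat.card_Icc]
    have := le_card_topIcc hi
    have := le_card_topIcc hj
    omega
  rcases le_or_gt l m with hlm | hlm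
  · exact hP l hl hlm
  · have := alph_add_bet_lt m
    rw [WeightIneq, wcount_eq_zero fun x hx =>
      (wtN_le_of_lt_two_pow (by rw [mem_Icc] at hx; omega)).trans_lt hlm]
    exact Nat.zero_le _

lemma Pm_succ_of_split {m i j i₂ j₂ i' j' : ℕ} (hb : 0 < wtN (bet m))
    (h : ∀ l, WeightIneq m i j l) (h₂ : ∀ l, WeightIneq m i₂ j₂ l)
    (hA : ∀ k, wcount (k + 1) (topIcc (alph m) i) + wcount k (topIcc (alph m) i₂) ≤
      wcount (k + 1) (topIcc (alph (m + 1)) i'))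
    (hB : ∀ k, wcount (k + 1) (topIcc (bet m) j) + wcount k (topIcc (bet m) j₂) +
      (if k + 1 ≤ wtN (bet m) then 1 else 0) ≤ wcount (k + 1) (topIcc (bet (m + 1)) j'))
    (hC : ∀ k, wcount (k + 1) (Icc 1 (i' + j')) ≤
      wcount (k + 1) (Icc 1 (i + j)) + wcount k (Icc 1 (i₂ + j₂)) + if k = 0 then 1 else 0) :
    Pm (m + 1) i' j' := by
  rintro (_ | k) hl -
  · omega
  have hbk : (if k = 0 then 1 else 0) ≤ if k + 1 ≤ wtN (bet m) then 1 else 0 := by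
    split_ifs <;> omega
  calc wcount (k + 1) (Icc 1 (i' + j'))
      ≤ wcount (k + 1) (Icc 1 (i + j)) + wcount k (Icc 1 (i₂ + j₂)) + if k = 0 then 1 else 0 := hC k
    _ ≤ wcount (k + 1) (topIcc (alph m) i) + wcount (k + 1) (topIcc (bet m) j) +
        (wcount k (topIcc (alph m) i₂) + wcount k (topIcc (bet m) j₂)) +
          if k + 1 ≤ wtN (bet m) then 1 else 0 := by gcongr <;> [exact h (k + 1); exact h₂ k]
    _ ≤ wcount (k + 1) (topIcc (alph (m + 1)) i') + wcount (k + 1) (topIcc (bet (m + 1)) j') := by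
      linarith [hA k, hB k]

/-- Lemma 9: implications among the `P` statements for odd `m ≥ 3`. -/
theorem stmt18 (m : ℕ) (hm : 3 ≤ m) (hmo : Odd m) (i j : ℕ)
    (hi : i ≤ alph m) (hj : j ≤ bet m) :
    (Pm m i j → Pm (m + 1) (2 * i) (2 * j + 1)) ∧
    (1 ≤ j → Pm m i (j - 1) → Pm m i j → Pm (m + 1) (2 * i) (2 * j)) ∧
    (i + 1 ≤ alph m → Pm m i j → Pm m (i + 1) j → Pm (m + 1) (2 * i + 1) (2 * j + 1)) ∧
    (1 ≤ j → i + 1 ≤ alph m → Pm m i (j - 1) → Pm m i j → Pm m (i + 1) (j - 1) →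
      Pm m (i + 1) j → Pm (m + 1) (2 * i + 1) (2 * j)) := by
  have hb : 1 ≤ bet m := one_le_bet (by omega)
  have ha : 1 ≤ alph m := hb.trans (by rw [alph, bet, pow_succ]; omega)
  have split := @Pm_succ_of_split m
  rw [alph_succ_of_odd hmo, bet_succ_of_odd hmo] at split
  have hwb := wtN_pos hb
  refine ⟨fun hP => ?_, fun hj₁ hP₁ hP => ?_, fun hi₁ hP hP₂ => ?_, fun hj₁ hi₁ _ hP hP₂ _ => ?_⟩
  · refine split hwb (hP.weightIneq hi hj) (hP.weightIneq hi hj)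
      (fun k => (wcount_topIcc_two_mul_two_mul ha k i).ge)
      (fun k => (wcount_topIcc_two_mul_add_one_two_mul_add_one hb k j).ge) fun k => ?_
    rw [show 2 * i + (2 * j + 1) = 2 * (i + j) + 1 by ring]
    exact (wcount_Icc_one_two_mul_add_one k _).le
  · obtain ⟨j, rfl⟩ := Nat.exists_eq_add_of_le' hj₁
    rw [Nat.add_sub_cancel] at hP₁
    refine split hwb (hP.weightIneq hi hj) (hP₁.weightIneq hi (by omega))
      (fun k => (wcount_topIcc_two_mul_two_mul ha k i).ge)
      (le_wcount_topIcc_two_mul_add_one_two_mul_succ hj)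
      fun k => ?_
    rw [show 2 * i + 2 * (j + 1) = 2 * (i + j) + 2 by ring, ← add_assoc]
    exact (wcount_Icc_one_two_mul_add_two k _).le
  · refine split hwb (hP.weightIneq hi hj) (hP₂.weightIneq hi₁ hj)
      (fun k => (wcount_topIcc_two_mul_two_mul_add_one hi₁ k).ge)
      (fun k => (wcount_topIcc_two_mul_add_one_two_mul_add_one hb k j).ge) fun k => ?_
    rw [show 2 * i + 1 + (2 * j + 1) = 2 * (i + j) + 2 by ring, add_right_comm i]
    exact wcount_Icc_one_two_mul_add_two_le k _
  · obtain ⟨j, rfl⟩ := Nat.exists_eq_add_of_le' hj₁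
    rw [Nat.add_sub_cancel] at hP₂
    refine split hwb (hP.weightIneq hi hj) (hP₂.weightIneq hi₁ (by omega))
      (fun k => (wcount_topIcc_two_mul_two_mul_add_one hi₁ k).ge)
      (le_wcount_topIcc_two_mul_add_one_two_mul_succ hj)
      fun k => ?_
    rw [show 2 * i + 1 + 2 * (j + 1) = 2 * (i + j + 1) + 1 by ring, ← add_assoc, add_right_comm i]
    exact (wcount_Icc_one_two_mul_add_one k _).le
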